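/- For any finitely supported sequence of complex numbers (a_m) and any positive integer D, the sum over all residues γ mod D of |∑_{N ≤ m < 2N} a_m e(γm/D)|² is at most (N + D)·∑_m |a_m|². -/

import Mathlib

open Finset

noncomputable def e (x : ℝ) : ℂ := Complex.exp (2 * Real.pi * Complex.I * x)

lemma e_add (x y : ℝ) : e (x + y) = e x * e y := by
  simp [e, ← Complex.exp_add]; ring_nf

lemma e_conj (x : ℝ) : (starRingEnd ℂ) (e x) = e (-x) := by
  rw [e, ← Complex.exp_conj]
  simp [e, map_ofNat]

lemma e_int (k : ℤ) : e k = 1 := by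
  simpa [e, mul_comm, mul_assoc, mul_left_comm] using Complex.exp_int_mul_two_pi_mul_I k

lemma e_nat_mul (n : ℕ) (x : ℝ) : e (n * x) = e x ^ n := by
  rw [e, e, ← Complex.exp_nat_mul]
  push_cast
  ring_nf

lemma e_eq_one_iff (k : ℤ) (D : ℕ) [NeZero D] : e ((k : ℝ) / D) = 1 ↔ (D : ℤ) ∣ k := by
  have hD : (D : ℂ) ≠ 0 := by exact_mod_cast (NeZero.ne D)
  have h2 : (2 * Real.pi * Complex.I : ℂ) ≠ 0 := by
    simp [Real.pi_ne_zero, Complex.I_ne_zero]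
  rw [e, Complex.exp_eq_one_iff]
  constructor
  · rintro ⟨n, hn⟩
    refine ⟨n, ?_⟩
    field_simp at hn
    have hkn : (k : ℂ) = ((n * D : ℤ) : ℂ) :=
      mul_left_cancel₀ h2 (by push_cast at hn ⊢; rw [← hn, div_mul_cancel₀ _ hD])
    have : k = n * D := by exact_mod_cast hkn
    linarith [mul_comm n (D : ℤ)]
  · rintro ⟨t, rfl⟩
    refine ⟨t, ?_⟩
    push_cast
    field_simp

lemma orth (D : ℕ) [NeZero D] (k : ℤ) :
    ∑ γ : ZMod D, e (((γ.val * k : ℤ) : ℝ) / D) = if (D : ℤ) ∣ k then (D : ℂ) else 0 := by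
  have hstep : ∑ γ : ZMod D, e (((γ.val * k : ℤ) : ℝ) / D)
      = ∑ j ∈ Finset.range D, e ((k : ℝ) / D) ^ j := by
    refine Finset.sum_nbij' (fun γ => γ.val) (fun j => (j : ZMod D)) ?_ ?_ ?_ ?_ ?_
    · intro γ _; exact Finset.mem_range.mpr (ZMod.val_lt γ)
    · intro j _; exact Finset.mem_univ _
    · intro γ _; exact ZMod.natCast_rightInverse γ
    · intro j hj; exact ZMod.val_cast_of_lt (Finset.mem_range.mp hj)
    · intro γ _
      rw [← e_nat_mul]
      congr 1
      push_cast
      ring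
  rw [hstep]
  by_cases h : (D : ℤ) ∣ k
  · rw [if_pos h]
    have h1 : e ((k : ℝ) / D) = 1 := (e_eq_one_iff k D).mpr h
    simp [h1]
  · rw [if_neg h]
    have h1 : e ((k : ℝ) / D) ≠ 1 := fun hc => h ((e_eq_one_iff k D).mp hc)
    rw [geom_sum_eq h1]
    have hD : (D : ℝ) ≠ 0 := by exact_mod_cast (NeZero.ne D)
    have hpow : e ((k : ℝ) / D) ^ D = 1 := by
      rw [← e_nat_mul]
      have : (D : ℝ) * ((k : ℝ) / D) = (k : ℝ) := by field_simp
      rw [this, e_int]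
    rw [hpow]
    simp

lemma count_le (D : ℕ) [NeZero D] (a b m : ℤ) (hab : a ≤ b) :
    (D : ℤ) * ((Finset.Ico a b).filter (fun m' => (D : ℤ) ∣ (m - m'))).card ≤ (b - a) + D := by
  have hD : (0 : ℤ) < D := by exact_mod_cast Nat.pos_of_ne_zero (NeZero.ne D)
  have hcard : (((Finset.Ico a b).filter (fun m' => (D : ℤ) ∣ (m - m'))).card : ℤ)
      ≤ (b - a) / D + 1 := by
    have h := Finset.card_le_card_of_injOn (fun x => (x - a) / D)
      (s := (Finset.Ico a b).filter (fun m' => (D : ℤ) ∣ (m - m')))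
      (t := Finset.Ico (0 : ℤ) ((b - a) / D + 1)) ?_ ?_
    · rw [Int.card_Ico] at h
      have h2 : (0:ℤ) ≤ (b - a) / D + 1 - 0 := by
        have : (0:ℤ) ≤ (b-a)/D := Int.ediv_nonneg (by omega) hD.le
        omega
      have h3 := Int.toNat_of_nonneg h2
      omega
    · intro x hx
      simp only [Finset.mem_coe, Finset.mem_filter, Finset.mem_Ico] at hx
      simp only [Finset.mem_coe, Finset.mem_Ico]
      constructor
      · exact Int.ediv_nonneg (by omega) hD.le
      · have : (x - a) / D ≤ (b - a) / D := Int.ediv_le_ediv hD (by omega)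
        omega
    · intro x hx y hy hxy
      simp only [Finset.mem_coe, Finset.mem_filter, Finset.mem_Ico] at hx hy
      obtain ⟨s, hs⟩ : (D : ℤ) ∣ x - y := by
        have := dvd_sub hy.2 hx.2
        simpa using this
      have hq : (x - a) / D = (y - a) / D + s := by
        have hxa : x - a = (y - a) + D * s := by omega
        rw [hxa, Int.add_mul_ediv_left _ _ (by positivity : (D:ℤ) ≠ 0)]
      have hxy' : (x - a) / D = (y - a) / D := hxy
      have hs0 : s = 0 := by omega
      simp [hs0] at hs
      omega
  calc (D : ℤ) * _ ≤ (D : ℤ) * ((b - a) / D + 1) := by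
        exact mul_le_mul_of_nonneg_left hcard hD.le
    _ ≤ (b - a) + D := by
        have := Int.ediv_mul_le (b - a) hD.ne'
        nlinarith [Int.ediv_mul_le (b - a) hD.ne']

theorem stmt0 (N D : ℕ) (hN : 0 < N) [NeZero D] (a : ℤ → ℂ) :
    ∑ γ : ZMod D,
      ‖∑ m ∈ Finset.Ico (N : ℤ) (2 * N), a m * e ((γ.val * m : ℤ) / (D : ℝ))‖ ^ 2
    ≤ (N + D : ℝ) * ∑ m ∈ Finset.Ico (N : ℤ) (2 * N), ‖a m‖ ^ 2 := by
  classical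
  set S := Finset.Ico (N : ℤ) (2 * N) with hS
  set g : ℤ → ℝ := fun m => ‖a m‖ ^ 2 with hg
  have hgnn : ∀ m, 0 ≤ g m := fun m => by positivity
  set c := starRingEnd ℂ
  -- Step 1: exact identity
  have hnorm : ∀ z : ℂ, (‖z‖ : ℝ) ^ 2 = (z * c z).re := by
    intro z
    rw [Complex.mul_conj]
    simp [Complex.sq_norm]
  have hterm : ∀ γ : ZMod D,
      (∑ m ∈ S, a m * e ((γ.val * m : ℤ) / (D : ℝ))) *
        c (∑ m ∈ S, a m * e ((γ.val * m : ℤ) / (D : ℝ)))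
      = ∑ m ∈ S, ∑ m' ∈ S, (a m * c (a m')) * e (((γ.val * (m - m') : ℤ) : ℝ) / D) := by
    intro γ
    rw [map_sum, Finset.sum_mul_sum]
    refine Finset.sum_congr rfl fun m _ => Finset.sum_congr rfl fun m' _ => ?_
    rw [map_mul, e_conj]
    calc a m * e ((γ.val * m : ℤ) / (D : ℝ)) * (c (a m') * e (-((γ.val * m' : ℤ) / (D : ℝ))))
        = (a m * c (a m')) * (e ((γ.val * m : ℤ) / (D : ℝ)) * e (-((γ.val * m' : ℤ) / (D : ℝ)))) := by ring
      _ = (a m * c (a m')) * e (((γ.val * (m - m') : ℤ) : ℝ) / D) := by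
          rw [← e_add]
          congr 2
          push_cast
          ring
  have hC : ∑ γ : ZMod D,
      (∑ m ∈ S, a m * e ((γ.val * m : ℤ) / (D : ℝ))) *
        c (∑ m ∈ S, a m * e ((γ.val * m : ℤ) / (D : ℝ)))
      = ∑ m ∈ S, ∑ m' ∈ S, (a m * c (a m')) * (if (D : ℤ) ∣ (m - m') then (D : ℂ) else 0) := by
    rw [Finset.sum_congr rfl fun γ _ => hterm γ, Finset.sum_comm]
    refine Finset.sum_congr rfl fun m _ => ?_
    rw [Finset.sum_comm]
    refine Finset.sum_congr rfl fun m' _ => ?_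
    rw [← Finset.mul_sum, orth]
  have key : ∑ γ : ZMod D, ‖∑ m ∈ S, a m * e ((γ.val * m : ℤ) / (D : ℝ))‖ ^ 2
      = ∑ m ∈ S, ∑ m' ∈ S,
          (if (D : ℤ) ∣ (m - m') then (D : ℝ) * (a m * c (a m')).re else 0) := by
    calc ∑ γ : ZMod D, ‖∑ m ∈ S, a m * e ((γ.val * m : ℤ) / (D : ℝ))‖ ^ 2
        = ∑ γ : ZMod D, ((∑ m ∈ S, a m * e ((γ.val * m : ℤ) / (D : ℝ))) *
            c (∑ m ∈ S, a m * e ((γ.val * m : ℤ) / (D : ℝ)))).re :=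
          Finset.sum_congr rfl fun γ _ => hnorm _
      _ = (∑ γ : ZMod D, (∑ m ∈ S, a m * e ((γ.val * m : ℤ) / (D : ℝ))) *
            c (∑ m ∈ S, a m * e ((γ.val * m : ℤ) / (D : ℝ)))).re := by
          rw [Complex.re_sum]
      _ = (∑ m ∈ S, ∑ m' ∈ S, (a m * c (a m')) *
            (if (D : ℤ) ∣ (m - m') then (D : ℂ) else 0)).re := by rw [hC]
      _ = ∑ m ∈ S, ∑ m' ∈ S,
            (if (D : ℤ) ∣ (m - m') then (D : ℝ) * (a m * c (a m')).re else 0) := by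
          rw [Complex.re_sum]
          refine Finset.sum_congr rfl fun m _ => ?_
          rw [Complex.re_sum]
          refine Finset.sum_congr rfl fun m' _ => ?_
          split_ifs with h
          · simp [Complex.mul_re]
            ring
          · simp
  -- Step 2: pointwise bound
  have hre : ∀ m m', (a m * c (a m')).re ≤ (g m + g m') / 2 := by
    intro m m'
    have h1 : (a m * c (a m')).re ≤ ‖a m * c (a m')‖ := Complex.re_le_norm _
    rw [norm_mul, RCLike.norm_conj] at h1
    have := sq_nonneg (‖a m‖ - ‖a m'‖)
    simp only [hg]
    nlinarith
  rw [key]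
  have hDnn : (0 : ℝ) ≤ (D : ℝ) := Nat.cast_nonneg D
  calc ∑ m ∈ S, ∑ m' ∈ S, (if (D : ℤ) ∣ (m - m') then (D : ℝ) * (a m * c (a m')).re else 0)
      ≤ ∑ m ∈ S, ∑ m' ∈ S, (if (D : ℤ) ∣ (m - m') then (D : ℝ) * ((g m + g m') / 2) else 0) := by
        refine Finset.sum_le_sum fun m _ => Finset.sum_le_sum fun m' _ => ?_
        split_ifs with h
        · exact mul_le_mul_of_nonneg_left (hre m m') hDnn
        · exact le_refl 0
    _ = (∑ m ∈ S, ∑ m' ∈ S, (if (D : ℤ) ∣ (m - m') then (D : ℝ) * g m else 0)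
        + ∑ m ∈ S, ∑ m' ∈ S, (if (D : ℤ) ∣ (m - m') then (D : ℝ) * g m' else 0)) / 2 := by
        rw [← Finset.sum_add_distrib]
        rw [Finset.sum_div]
        refine Finset.sum_congr rfl fun m _ => ?_
        rw [← Finset.sum_add_distrib, Finset.sum_div]
        refine Finset.sum_congr rfl fun m' _ => ?_
        split_ifs with h <;> ring
    _ = ∑ m ∈ S, ∑ m' ∈ S, (if (D : ℤ) ∣ (m - m') then (D : ℝ) * g m else 0) := by
        have hsymm : ∑ m ∈ S, ∑ m' ∈ S, (if (D : ℤ) ∣ (m - m') then (D : ℝ) * g m' else 0)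
            = ∑ m ∈ S, ∑ m' ∈ S, (if (D : ℤ) ∣ (m - m') then (D : ℝ) * g m else 0) := by
          rw [Finset.sum_comm]
          refine Finset.sum_congr rfl fun m _ => Finset.sum_congr rfl fun m' _ => ?_
          exact if_congr (dvd_sub_comm) rfl rfl
        rw [hsymm]
        ring
    _ = ∑ m ∈ S, ((S.filter (fun m' => (D : ℤ) ∣ (m - m'))).card : ℝ) * ((D : ℝ) * g m) := by
        refine Finset.sum_congr rfl fun m _ => ?_
        rw [Finset.sum_ite, Finset.sum_const, Finset.sum_const_zero, add_zero, nsmul_eq_mul]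
    _ ≤ ∑ m ∈ S, (N + D : ℝ) * g m := by
        refine Finset.sum_le_sum fun m _ => ?_
        have hcount := count_le D (N : ℤ) (2 * N) m (by omega)
        have h2 : ((D : ℤ) : ℝ) * ((S.filter (fun m' => (D : ℤ) ∣ (m - m'))).card : ℝ)
            ≤ ((2 * (N:ℤ) - N + D : ℤ) : ℝ) := by
          exact_mod_cast hcount
        push_cast at h2
        have h3 : (2 * (N : ℝ) - N + D) = (N + D : ℝ) := by ring
        calc ((S.filter (fun m' => (D : ℤ) ∣ (m - m'))).card : ℝ) * ((D : ℝ) * g m)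
            = ((D : ℝ) * ((S.filter (fun m' => (D : ℤ) ∣ (m - m'))).card : ℝ)) * g m := by ring
          _ ≤ (N + D : ℝ) * g m := by
              refine mul_le_mul_of_nonneg_right ?_ (hgnn m)
              linarith
    _ = (N + D : ℝ) * ∑ m ∈ S, g m := by rw [Finset.mul_sum]
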